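/- arXiv:2101.03770 — 4 statements merged into one kernel-verified Lean document; each statement's English description precedes it below -/
import Mathlib

section
/- Let b, β, c > 0 be real numbers with bβ < 1, fix q ∈ ℝ, and let r be the unique real number with r = tanh(β(q + br)). Then every differentiable function p : [0, ∞) → ℝ satisfying the mean field Glauber equation ṗ(t) = c·( −p(t) + tanh(β(q + b·p(t))) ) for all t ≥ 0 tends to r as t → +∞. -/
/-!
Since `tanh` is 1-Lipschitz, `g x = tanh (β (q + b x))` is a `bβ`-contraction with fixed point `r`,
so the Glauber field `v x = c (-x + g x)` is strongly dissipative about `r`: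
`(x - r) v(x) ≤ -c (1 - bβ) (x - r)²`. Hence `u = (p - r)²` satisfies `u' ≤ -2c (1 - bβ) u`,
and Grönwall's inequality makes it decay exponentially.
-/

open Filter Set Real Topology NNReal

theorem Real.hasDerivAt_tanh (x : ℝ) : HasDerivAt tanh (cosh x ^ 2)⁻¹ x := by
  rw [show tanh = sinh / cosh from funext tanh_eq_sinh_div_cosh]
  exact ((hasDerivAt_sinh x).div (hasDerivAt_cosh x) (cosh_pos x).ne').congr_deriv
    (by rw [← sq, ← sq, cosh_sq_sub_sinh_sq, one_div])

theorem Real.lipschitzWith_one_tanh : LipschitzWith 1 tanh := by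
  refine lipschitzWith_of_nnnorm_deriv_le (fun x => (hasDerivAt_tanh x).differentiableAt)
    fun x => ?_
  rw [(hasDerivAt_tanh x).deriv, ← NNReal.coe_le_coe, coe_nnnorm, NNReal.coe_one, norm_inv,
    norm_pow, Real.norm_eq_abs, abs_of_pos (cosh_pos x)]
  exact inv_le_one_of_one_le₀ (one_le_pow₀ (one_le_cosh x))

theorem Real.lipschitzWith_tanh_comp_affine (β q b : ℝ) :
    LipschitzWith ‖β * b‖₊ fun x => tanh (β * (q + b * x)) :=
  LipschitzWith.of_dist_le_mul fun x y =>
    calc dist (tanh (β * (q + b * x))) (tanh (β * (q + b * y)))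
        ≤ dist (β * (q + b * x)) (β * (q + b * y)) := by
          simpa using lipschitzWith_one_tanh.dist_le_mul (β * (q + b * x)) (β * (q + b * y))
      _ = ‖β * b‖ * dist x y := by
          rw [dist_eq_norm, dist_eq_norm, ← norm_mul]; ring_nf

theorem sub_mul_relaxation_le_of_lipschitzWith {g : ℝ → ℝ} {K : ℝ≥0} (hg : LipschitzWith K g)
    {r : ℝ} (hr : Function.IsFixedPt g r) {c : ℝ} (hc : 0 ≤ c) (x : ℝ) :
    (x - r) * (c * (-x + g x)) ≤ -(c * (1 - K)) * (x - r) ^ 2 := by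
  have hcontract : (x - r) * (g x - g r) ≤ K * (x - r) ^ 2 :=
    calc (x - r) * (g x - g r) ≤ |x - r| * |g x - g r| := by
          rw [← abs_mul]; exact le_abs_self _
      _ ≤ |x - r| * (K * |x - r|) := by
          gcongr; simpa [Real.dist_eq] using hg.dist_le_mul x r
      _ = K * (x - r) ^ 2 := by rw [← sq_abs (x - r)]; ring
  rw [hr] at hcontract
  nlinarith

theorem le_mul_exp_of_hasDerivWithinAt_le_mul {u u' : ℝ → ℝ} {K : ℝ}
    (hu : ∀ t ∈ Ici (0 : ℝ), HasDerivWithinAt u (u' t) (Ici 0) t)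
    (hK : ∀ t ∈ Ici (0 : ℝ), u' t ≤ K * u t) {t : ℝ} (ht : 0 ≤ t) :
    u t ≤ u 0 * exp (K * t) := by
  have hderiv : ∀ s ∈ Ico 0 t, HasDerivWithinAt u (u' s) (Ici s) s := fun s hs =>
    (hu s hs.1).mono (Ici_subset_Ici.mpr hs.1)
  have := le_gronwallBound_of_liminf_deriv_right_le (δ := u 0) (ε := 0)
    (fun s hs => (hu s hs.1).continuousWithinAt.mono Icc_subset_Ici_self)
    (fun s hs _ hr => (hderiv s hs).liminf_right_slope_le hr) le_rfl
    (fun s hs => by simpa using hK s hs.1) t ⟨ht, le_rfl⟩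
  simpa [gronwallBound_ε0] using this

theorem tendsto_of_hasDerivWithinAt_of_sub_mul_le {p v : ℝ → ℝ} {r κ : ℝ} (hκ : 0 < κ)
    (hp : ∀ t ∈ Ici (0 : ℝ), HasDerivWithinAt p (v (p t)) (Ici 0) t)
    (hv : ∀ x, (x - r) * v x ≤ -κ * (x - r) ^ 2) :
    Tendsto p atTop (𝓝 r) := by
  have hsq : ∀ t ∈ Ici (0 : ℝ),
      HasDerivWithinAt (fun s => (p s - r) ^ 2) (2 * ((p t - r) * v (p t))) (Ici 0) t :=
    fun t ht => by simpa [mul_comm, mul_assoc] using ((hp t ht).sub_const r).fun_pow 2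
  have hbound : ∀ t, 0 ≤ t → (p t - r) ^ 2 ≤ (p 0 - r) ^ 2 * exp (-(2 * κ) * t) :=
    fun t ht => le_mul_exp_of_hasDerivWithinAt_le_mul hsq
      (fun s _ => by linarith [hv (p s)]) ht
  have hdecay : Tendsto (fun t => (p 0 - r) ^ 2 * exp (-(2 * κ) * t)) atTop (𝓝 0) := by
    simpa using (tendsto_exp_atBot.comp
      (tendsto_id.const_mul_atTop_of_neg (by linarith : -(2 * κ) < 0))).const_mul ((p 0 - r) ^ 2)
  have hsq_tendsto : Tendsto (fun t => (p t - r) ^ 2) atTop (𝓝 0) :=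
    squeeze_zero' (Eventually.of_forall fun t => sq_nonneg _)
      (eventually_ge_atTop 0 |>.mono hbound) hdecay
  have habs : Tendsto (fun t => |p t - r|) atTop (𝓝 0) := by
    simpa [sqrt_sq_eq_abs] using hsq_tendsto.sqrt
  simpa using (tendsto_zero_iff_abs_tendsto_zero _).mpr habs |>.add_const r

/-- Case A (`bβ < 1`): every solution `p : [0,∞) → ℝ` of the mean field Glauber
equation `ṗ = c(-p + tanh (β (q + b p)))` converges, as `t → +∞`, to the unique
solution `r` of the self-consistency equation `r = tanh (β (q + b r))`. -/
theorem glauber_relaxation_caseA (b β c q r : ℝ) (hb : 0 < b) (hβ : 0 < β)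
    (hc : 0 < c) (h : b * β < 1) (hr : r = Real.tanh (β * (q + b * r)))
    (p : ℝ → ℝ)
    (hp : ∀ t ∈ Set.Ici (0 : ℝ), HasDerivWithinAt p
      (c * (-(p t) + Real.tanh (β * (q + b * p t)))) (Set.Ici 0) t) :
    Tendsto p atTop (nhds r) := by
  have hrate : ((‖β * b‖₊ : ℝ≥0) : ℝ) = b * β := by
    rw [coe_nnnorm, Real.norm_eq_abs, abs_of_pos (by positivity), mul_comm]
  have hdissipative := sub_mul_relaxation_le_of_lipschitzWith
    (lipschitzWith_tanh_comp_affine β q b) hr.symm hc.le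
  rw [hrate] at hdissipative
  exact tendsto_of_hasDerivWithinAt_of_sub_mul_le (mul_pos hc (sub_pos.mpr h)) hp hdissipative
end

section
/- Let φ : ℝ → ℝ be twice continuously differentiable, let σ ∈ ℝ, and let a > b > 0. Consider the contact Hamiltonian H(p, q, z) = −a(z − φ(q)) + b(p − φ'(q))(q − σ) on ℝ³ and the associated contact Hamiltonian system ṗ = ∂H/∂q + p·∂H/∂z, q̇ = −∂H/∂p, ż = H − p·∂H/∂p. Then every solution (p(t), q(t), z(t)) defined for all t ≥ 0 converges, as t → +∞, to the point (φ'(σ), σ, φ(σ)); moreover q(t) = σ + (q(0) − σ)e^{−bt}, so that if q(0) < σ then the entropy q(t) is strictly increasing. -/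
/-!
In the coordinates `Q = q - σ`, `P = p - φ'(q)`, `Z = z - φ(q)` measuring the distance to the
Legendrian curve of equilibria, the contact Hamiltonian system decouples into
`Q̇ = -b Q`, `Ṗ = -(a - b) P`, `Ż = -a Z`. Each coordinate therefore decays exponentially,
so `q → σ`, and by continuity of `φ` and `φ'` also `p → φ'(σ)` and `z → φ(σ)`.
-/

open Filter Real Set

theorem eq_mul_exp_of_hasDerivWithinAt {c : ℝ} {f : ℝ → ℝ}
    (hf : ∀ t ∈ Ici (0 : ℝ), HasDerivWithinAt f (-c * f t) (Ici 0) t) :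
    ∀ t ∈ Ici (0 : ℝ), f t = f 0 * exp (-c * t) := by
  have hexp (x : ℝ) : HasDerivAt (fun t => exp (c * t)) (exp (c * x) * c) x := by
    simpa using ((hasDerivAt_id x).const_mul c).exp
  have hconst : ∀ t ∈ Ici (0 : ℝ), f t * exp (c * t) = f 0 := by
    intro t ht
    have := constant_of_has_deriv_right_zero (f := fun t => f t * exp (c * t)) (b := t)
      (fun x hx => ((hf x hx.1).continuousWithinAt.mono fun _ hy => hy.1).mul
        (hexp x).continuousAt.continuousWithinAt)
      (fun x hx => (((hf x hx.1).mono (Ici_subset_Ici.mpr hx.1)).mul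
        (hexp x).hasDerivWithinAt).congr_deriv (by ring))
      t ⟨ht, le_rfl⟩
    simpa using this
  intro t ht
  rw [← hconst t ht, mul_assoc, ← exp_add]
  simp

theorem tendsto_zero_of_hasDerivWithinAt_neg_mul {c : ℝ} (hc : 0 < c) {f : ℝ → ℝ}
    (hf : ∀ t ∈ Ici (0 : ℝ), HasDerivWithinAt f (-c * f t) (Ici 0) t) :
    Tendsto f atTop (nhds 0) := by
  have hexp : Tendsto (fun t => exp (-c * t)) atTop (nhds 0) :=
    tendsto_exp_atBot.comp (tendsto_id.const_mul_atTop_of_neg (neg_neg_of_pos hc))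
  have hsol : Tendsto (fun t => f 0 * exp (-c * t)) atTop (nhds 0) := by
    simpa using hexp.const_mul (f 0)
  exact hsol.congr' <| (eventually_ge_atTop 0).mono fun t ht =>
    (eq_mul_exp_of_hasDerivWithinAt hf t ht).symm

/-- Newton's law of cooling via the contact Hamiltonian
`H(p,q,z) = -a(z - φ(q)) + b(p - φ'(q))(q - σ)` with `a > b > 0`:
every solution of the contact Hamiltonian system
`ṗ = ∂H/∂q + p ∂H/∂z`, `q̇ = -∂H/∂p`, `ż = H - p ∂H/∂p`
defined for all `t ≥ 0` converges to the equilibrium `(φ'(σ), σ, φ(σ))`;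
moreover `q(t) = σ + (q(0) - σ) e^{-bt}`, so if `q(0) < σ` then the entropy
`q(t)` is strictly increasing. -/
theorem newton_cooling (φ : ℝ → ℝ) (hφ : ContDiff ℝ 2 φ) (σ a b : ℝ)
    (hab : b < a) (hb : 0 < b) (p q z : ℝ → ℝ)
    (hp : ∀ t ∈ Set.Ici (0 : ℝ), HasDerivWithinAt p
      ((a * deriv φ (q t) - b * deriv (deriv φ) (q t) * (q t - σ)
          + b * (p t - deriv φ (q t))) + p t * (-a)) (Set.Ici 0) t)
    (hq : ∀ t ∈ Set.Ici (0 : ℝ), HasDerivWithinAt q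
      (-(b * (q t - σ))) (Set.Ici 0) t)
    (hz : ∀ t ∈ Set.Ici (0 : ℝ), HasDerivWithinAt z
      ((-a * (z t - φ (q t)) + b * (p t - deriv φ (q t)) * (q t - σ))
        - p t * (b * (q t - σ))) (Set.Ici 0) t) :
    Tendsto (fun t => (p t, q t, z t)) atTop (nhds (deriv φ σ, σ, φ σ)) ∧
    (∀ t ∈ Set.Ici (0 : ℝ), q t = σ + (q 0 - σ) * Real.exp (-b * t)) ∧
    (q 0 < σ → StrictMonoOn q (Set.Ici 0)) := by
  have hQ : ∀ t ∈ Ici (0 : ℝ), HasDerivWithinAt (fun t => q t - σ) (-b * (q t - σ)) (Ici 0) t :=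
    fun t ht => ((hq t ht).sub_const σ).congr_deriv (by ring)
  have hP : ∀ t ∈ Ici (0 : ℝ), HasDerivWithinAt (fun t => p t - deriv φ (q t))
      (-(a - b) * (p t - deriv φ (q t))) (Ici 0) t := fun t ht =>
    ((hp t ht).sub ((hφ.differentiable_deriv_two (q t)).hasDerivAt.comp_hasDerivWithinAt t
      (hq t ht))).congr_deriv (by ring)
  have hZ : ∀ t ∈ Ici (0 : ℝ), HasDerivWithinAt (fun t => z t - φ (q t))
      (-a * (z t - φ (q t))) (Ici 0) t := fun t ht =>
    ((hz t ht).sub ((hφ.differentiable two_ne_zero (q t)).hasDerivAt.comp_hasDerivWithinAt t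
      (hq t ht))).congr_deriv (by ring)
  have hq_eq (t) (ht : t ∈ Ici (0 : ℝ)) : q t = σ + (q 0 - σ) * exp (-b * t) := by
    linarith [eq_mul_exp_of_hasDerivWithinAt hQ t ht]
  have hq_lim : Tendsto q atTop (nhds σ) := by
    simpa using (tendsto_zero_of_hasDerivWithinAt_neg_mul hb hQ).add_const σ
  have hp_lim : Tendsto p atTop (nhds (deriv φ σ)) := by
    simpa using (tendsto_zero_of_hasDerivWithinAt_neg_mul (sub_pos.mpr hab) hP).add
      ((hφ.continuous_deriv one_le_two).tendsto σ |>.comp hq_lim)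
  have hz_lim : Tendsto z atTop (nhds (φ σ)) := by
    simpa using (tendsto_zero_of_hasDerivWithinAt_neg_mul (hb.trans hab) hZ).add
      (hφ.continuous.tendsto σ |>.comp hq_lim)
  refine ⟨hp_lim.prodMk_nhds (hq_lim.prodMk_nhds hz_lim), hq_eq, fun hq0 => ?_⟩
  have hexp_anti : StrictAnti fun t : ℝ => exp (-b * t) :=
    exp_strictMono.comp_strictAnti fun s t hst => by nlinarith
  exact ((hexp_anti.const_mul_of_neg (sub_neg.mpr hq0)).const_add σ).strictMonoOn _ |>.congr
    fun t ht => (hq_eq t ht).symm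
end

section
/- Let a, ε, N > 0 with εN < a, and let k ∈ ℤ. Suppose (P, Q, Z) : [0, ∞) → ℝ³ is differentiable and satisfies Ṗ = −(a + εN·sin(2NQ))·P, Q̇ = ε·sin²(NQ), Ż = −aZ, with Q(0) ∈ (πk/N, π(k+1)/N). Then Q(t) is strictly increasing and converges to π(k+1)/N as t → +∞, while P(t) → 0 and Z(t) → 0 as t → +∞. -/
/-!
The equations decouple. `Z` and `P` decay exponentially: the rate `a + εN sin(2NQ)` of `P` is at
least `a - εN > 0`, so `P² e^{2(a - εN)t}` is nonincreasing. For `Q`, the angle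
`θ = NQ - πk - π/2 ∈ (-π/2, π/2)` satisfies `(tan θ)' = εN`, which gives the explicit solution
`Q(t) = (πk + π/2 + arctan (tan θ(0) + εNt)) / N`; since `ε sin²(N·)` is Lipschitz this is the only
solution, and it increases strictly to `π(k+1)/N`.
-/

open Filter Real Set Topology

theorem lipschitzWith_sin_sq : LipschitzWith 1 fun x : ℝ => sin x ^ 2 := by
  have hderiv (x : ℝ) : HasDerivAt (fun x => sin x ^ 2) (sin (2 * x)) x :=
    ((hasDerivAt_sin x).pow 2).congr_deriv (by rw [sin_two_mul]; ring)
  refine lipschitzWith_of_nnnorm_deriv_le (fun x => (hderiv x).differentiableAt) fun x => ?_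
  rw [(hderiv x).deriv, ← NNReal.coe_le_coe, coe_nnnorm, NNReal.coe_one, norm_eq_abs]
  exact abs_sin_le_one _

theorem lipschitzWith_mul_sin_mul_sq (ε N : ℝ) :
    LipschitzWith (‖ε‖₊ * (1 * ‖N‖₊)) fun x : ℝ => ε * sin (N * x) ^ 2 :=
  (lipschitzWith_smul ε).comp (lipschitzWith_sin_sq.comp (lipschitzWith_smul N))

theorem eqOn_Ici_of_hasDerivWithinAt {E : Type*} [NormedAddCommGroup E] [NormedSpace ℝ E]
    {v : E → E} {K : NNReal} {f g : ℝ → E} {t₀ : ℝ} (hv : LipschitzWith K v)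
    (hf : ∀ t ∈ Ici t₀, HasDerivWithinAt f (v (f t)) (Ici t₀) t)
    (hg : ∀ t ∈ Ici t₀, HasDerivWithinAt g (v (g t)) (Ici t₀) t) (h₀ : f t₀ = g t₀) :
    EqOn f g (Ici t₀) := fun _ hb =>
  ODE_solution_unique (v := fun _ => v) (fun _ => hv)
    (fun t ht => (hf t ht.1).continuousWithinAt.mono Icc_subset_Ici_self)
    (fun t ht => (hf t ht.1).mono (Ici_subset_Ici.2 ht.1))
    (fun t ht => (hg t ht.1).continuousWithinAt.mono Icc_subset_Ici_self)
    (fun t ht => (hg t ht.1).mono (Ici_subset_Ici.2 ht.1)) h₀ (right_mem_Icc.2 hb)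

theorem abs_le_mul_exp_of_hasDerivWithinAt {P μ : ℝ → ℝ} {r : ℝ}
    (hP : ∀ t ∈ Ici 0, HasDerivWithinAt P (-μ t * P t) (Ici 0) t)
    (hμ : ∀ t ∈ Ici 0, r ≤ μ t) {t : ℝ} (ht : 0 ≤ t) :
    |P t| ≤ |P 0| * exp (-(r * t)) := by
  set F := fun s => P s ^ 2 * exp (2 * r * s)
  have hF : ∀ x ∈ Ici 0,
      HasDerivWithinAt F ((r - μ x) * (2 * P x ^ 2 * exp (2 * r * x))) (Ici 0) x := by
    intro x hx
    have hexp := ((hasDerivAt_id x).const_mul (2 * r)).exp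
    exact (((hP x hx).pow 2).mul hexp.hasDerivWithinAt).congr_deriv
      (by simp only [Pi.pow_apply, id]; ring)
  have hanti : AntitoneOn F (Ici 0) := by
    refine antitoneOn_of_hasDerivWithinAt_nonpos
      (f' := fun x => (r - μ x) * (2 * P x ^ 2 * exp (2 * r * x))) (convex_Ici 0)
      (fun x hx => (hF x hx).continuousWithinAt) (fun x hx => ?_) fun x hx => ?_
    all_goals simp only [interior_Ici] at hx ⊢
    · exact (hF x (mem_Ici.2 hx.le)).mono Ioi_subset_Ici_self
    · exact mul_nonpos_of_nonpos_of_nonneg (sub_nonpos.2 (hμ x (mem_Ici.2 hx.le))) (by positivity)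
  have hsq : P t ^ 2 ≤ (|P 0| * exp (-(r * t))) ^ 2 := by
    have hFt : P t ^ 2 * exp (2 * r * t) ≤ P 0 ^ 2 := by simpa [F] using hanti self_mem_Ici ht ht
    calc P t ^ 2 = P t ^ 2 * exp (2 * r * t) * exp (-(r * t)) ^ 2 := by
          rw [mul_assoc, sq (exp _), ← exp_add, ← exp_add]; ring_nf; simp
      _ ≤ P 0 ^ 2 * exp (-(r * t)) ^ 2 := by gcongr
      _ = (|P 0| * exp (-(r * t))) ^ 2 := by rw [mul_pow, sq_abs]
  simpa [abs_of_nonneg (by positivity : 0 ≤ |P 0| * exp (-(r * t)))] using sq_le_sq.1 hsq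

theorem tendsto_zero_of_hasDerivWithinAt {P μ : ℝ → ℝ} {r : ℝ} (hr : 0 < r)
    (hP : ∀ t ∈ Ici 0, HasDerivWithinAt P (-μ t * P t) (Ici 0) t)
    (hμ : ∀ t ∈ Ici 0, r ≤ μ t) : Tendsto P atTop (𝓝 0) := by
  refine squeeze_zero_norm' ?_ (by simpa using
    (tendsto_exp_neg_atTop_nhds_zero.comp (tendsto_id.const_mul_atTop hr)).const_mul |P 0|)
  filter_upwards [eventually_ge_atTop 0] with t ht
  exact abs_le_mul_exp_of_hasDerivWithinAt hP hμ ht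

noncomputable def arctanOrbit (ε N : ℝ) (k : ℤ) (q₀ t : ℝ) : ℝ :=
  (π * k + π / 2 + arctan (tan (N * q₀ - π * k - π / 2) + ε * N * t)) / N

section arctanOrbit

variable {ε N : ℝ} {k : ℤ} {q₀ : ℝ}

theorem sin_mul_arctanOrbit_sq (hN : N ≠ 0) (t : ℝ) :
    sin (N * arctanOrbit ε N k q₀ t) ^ 2 =
      1 / (1 + (tan (N * q₀ - π * k - π / 2) + ε * N * t) ^ 2) := by
  set x := tan (N * q₀ - π * k - π / 2) + ε * N * t
  have hNq : N * arctanOrbit ε N k q₀ t = arctan x + π / 2 + k * π := by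
    rw [arctanOrbit, mul_div_cancel₀ _ hN]; ring
  rw [hNq, sin_add_int_mul_pi, sin_add_pi_div_two, mul_pow, cos_sq_arctan, ← sq_abs,
    abs_neg_one_zpow, one_pow, one_mul]

theorem hasDerivAt_arctanOrbit (hN : N ≠ 0) (t : ℝ) :
    HasDerivAt (arctanOrbit ε N k q₀) (ε * sin (N * arctanOrbit ε N k q₀ t) ^ 2) t := by
  have := ((((hasDerivAt_id t).const_mul (ε * N)).const_add
    (tan (N * q₀ - π * k - π / 2))).arctan.const_add (π * k + π / 2)).div_const N
  refine this.congr_deriv ?_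
  rw [sin_mul_arctanOrbit_sq hN]
  field_simp
  simp

theorem arctanOrbit_zero (hN : 0 < N) (hq₀ : q₀ ∈ Ioo (π * k / N) (π * (k + 1) / N)) :
    arctanOrbit ε N k q₀ 0 = q₀ := by
  obtain ⟨hl, hr⟩ := hq₀
  rw [div_lt_iff₀ hN] at hl
  rw [lt_div_iff₀ hN] at hr
  rw [arctanOrbit, mul_zero, add_zero, arctan_tan (by linarith) (by linarith)]
  field_simp
  ring

theorem strictMono_arctanOrbit (hε : 0 < ε) (hN : 0 < N) : StrictMono (arctanOrbit ε N k q₀) :=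
  fun _ _ hst => div_lt_div_of_pos_right (add_lt_add_right (arctan_strictMono
    (add_lt_add_right (mul_lt_mul_of_pos_left hst (mul_pos hε hN)) _)) _) hN

theorem tendsto_arctanOrbit_atTop (hεN : 0 < ε * N) :
    Tendsto (arctanOrbit ε N k q₀) atTop (𝓝 (π * (k + 1) / N)) := by
  have h := tendsto_arctan_atTop.mono_right nhdsWithin_le_nhds |>.comp
    (tendsto_atTop_add_const_left _ (tan (N * q₀ - π * k - π / 2))
      (tendsto_id.const_mul_atTop hεN))
  rw [show π * (k + 1) / N = (π * k + π / 2 + π / 2) / N by ring]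
  exact (h.const_add (π * k + π / 2)).div_const N

end arctanOrbit

/-- Relaxation with small total entropy increment: for the contact Hamiltonian
system `Ṗ = -(a + εN sin(2NQ)) P`, `Q̇ = ε sin²(NQ)`, `Ż = -aZ` with
`a, ε, N > 0`, `εN < a`, any solution on `[0,∞)` with
`Q(0) ∈ (πk/N, π(k+1)/N)` has strictly increasing `Q(t)` converging to
`π(k+1)/N`, while `P(t) → 0` and `Z(t) → 0` as `t → +∞`. -/
theorem entropy_increasing_relaxation (a ε N : ℝ) (ha : 0 < a) (hε : 0 < ε)
    (hN : 0 < N) (hεN : ε * N < a) (k : ℤ) (P Q Z : ℝ → ℝ)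
    (hP : ∀ t ∈ Set.Ici (0 : ℝ), HasDerivWithinAt P
      (-(a + ε * N * Real.sin (2 * N * Q t)) * P t) (Set.Ici 0) t)
    (hQ : ∀ t ∈ Set.Ici (0 : ℝ), HasDerivWithinAt Q
      (ε * Real.sin (N * Q t) ^ 2) (Set.Ici 0) t)
    (hZ : ∀ t ∈ Set.Ici (0 : ℝ), HasDerivWithinAt Z (-a * Z t) (Set.Ici 0) t)
    (hQ0 : Q 0 ∈ Set.Ioo (Real.pi * (k : ℝ) / N) (Real.pi * ((k : ℝ) + 1) / N)) :
    StrictMonoOn Q (Set.Ici 0) ∧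
    Tendsto Q atTop (nhds (Real.pi * ((k : ℝ) + 1) / N)) ∧
    Tendsto P atTop (nhds 0) ∧
    Tendsto Z atTop (nhds 0) := by
  have hQ_eq : EqOn Q (arctanOrbit ε N k (Q 0)) (Ici 0) :=
    eqOn_Ici_of_hasDerivWithinAt (lipschitzWith_mul_sin_mul_sq ε N) hQ
      (fun t _ => (hasDerivAt_arctanOrbit hN.ne' t).hasDerivWithinAt)
      (arctanOrbit_zero hN hQ0).symm
  refine ⟨((strictMono_arctanOrbit hε hN).strictMonoOn _).congr hQ_eq.symm,
    (tendsto_arctanOrbit_atTop (mul_pos hε hN)).congr'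
      (hQ_eq.symm.eventuallyEq_of_mem (Ici_mem_atTop 0)),
    tendsto_zero_of_hasDerivWithinAt (sub_pos.2 hεN) hP fun t _ => ?_,
    tendsto_zero_of_hasDerivWithinAt ha hZ fun _ _ => le_rfl⟩
  nlinarith [neg_one_le_sin (2 * N * Q t), mul_pos hε hN]
end

section
/- Let a, b ∈ ℝ and α, β > 0, and suppose P, Z : ℝ → ℝ satisfy, for every Q ∈ ℝ, the equations P(Q) − tanh(αQ + α(a−b)(P(Q) + tanh(βQ))) + tanh(βQ) = 0 and Z(Q) − α^{−1}·log(2·cosh(αQ + α(a−b)(P(Q) + tanh(βQ)))) + β^{−1}·log(2·cosh(βQ)) + (1/2)(a−b)(P(Q) + tanh(βQ))² = 0. Then P(Q) → 0 and Z(Q) → (a−b)/2 as Q → +∞. -/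
/-!
Write `m = P + tanh (β Q)` for the magnetization and `A = α Q + α (a - b) m` for the effective
field of the `a, α`-model, so that the first equation reads `m = tanh A`. Since `|m| ≤ 1`, the
field satisfies `A ≥ α Q - α |a - b|`, hence `A → ∞`, `m → 1` and `P = m - tanh (β Q) → 0`.
For the second equation, `log (2 cosh x) = x + o(1)` as `x → ∞`; the linear parts `α⁻¹ A` and
`β⁻¹ (β Q)` cancel up to `(a - b) m`, leaving `Z = (a - b) m - (a - b) m² / 2 + o(1) → (a - b) / 2`.
-/

open Filter Topology Real

namespace Real

theorem tanh_eq_one_sub_div_one_add (x : ℝ) :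
    tanh x = (1 - exp (-2 * x)) / (1 + exp (-2 * x)) := by
  have hx : exp x * exp (-2 * x) = exp (-x) := by rw [← exp_add]; ring_nf
  rw [tanh_eq, div_eq_div_iff (by positivity) (by positivity)]
  linear_combination 2 * hx

theorem two_mul_cosh_eq_exp_mul_one_add (x : ℝ) :
    2 * cosh x = exp x * (1 + exp (-2 * x)) := by
  have hx : exp x * exp (-2 * x) = exp (-x) := by rw [← exp_add]; ring_nf
  rw [cosh_eq]
  linear_combination -hx

theorem tendsto_exp_neg_two_mul_atTop : Tendsto (fun x ↦ exp (-2 * x)) atTop (𝓝 0) :=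
  tendsto_exp_atBot.comp <| tendsto_id.const_mul_atTop_of_neg (by norm_num)

theorem tendsto_tanh_atTop : Tendsto tanh atTop (𝓝 1) := by
  have hu := tendsto_exp_neg_two_mul_atTop
  have h : Tendsto (fun x ↦ (1 - exp (-2 * x)) / (1 + exp (-2 * x))) atTop
      (𝓝 ((1 - 0) / (1 + 0))) :=
    (tendsto_const_nhds.sub hu).div (tendsto_const_nhds.add hu) (by norm_num)
  rw [sub_zero, add_zero, div_one] at h
  exact h.congr fun x ↦ (tanh_eq_one_sub_div_one_add x).symm

theorem tendsto_log_two_mul_cosh_sub_self_atTop :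
    Tendsto (fun x ↦ log (2 * cosh x) - x) atTop (𝓝 0) := by
  have hlog : ContinuousAt (fun u ↦ log (1 + u)) 0 :=
    (continuousAt_const.add continuousAt_id).log (by norm_num)
  have h := hlog.tendsto.comp tendsto_exp_neg_two_mul_atTop
  rw [add_zero, log_one] at h
  refine h.congr fun x ↦ ?_
  rw [Function.comp_apply, two_mul_cosh_eq_exp_mul_one_add,
    log_mul (exp_ne_zero x) (by positivity), log_exp, add_sub_cancel_left]

end Real

/-- A solution `f` of the self-consistency equation `f = g + c tanh f` stays within `|c|` of `g`. -/
theorem tendsto_atTop_of_eq_add_mul_tanh {ι : Type*} {l : Filter ι} {f g : ι → ℝ} {c : ℝ}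
    (hg : Tendsto g l atTop) (hf : ∀ i, f i = g i + c * tanh (f i)) : Tendsto f l atTop := by
  have hbound : ∀ i, -|c| ≤ c * tanh (f i) := fun i ↦ by
    have h := abs_mul c (tanh (f i)) ▸
      mul_le_of_le_one_right (abs_nonneg c) (abs_tanh_lt_one (f i)).le
    exact (neg_le_neg h).trans (neg_abs_le _)
  exact (tendsto_atTop_add_right_of_le l _ hg hbound).congr fun i ↦ (hf i).symm

theorem eq_of_free_energy_eq_zero {a b α β Q m Z : ℝ} (hα : α ≠ 0) (hβ : β ≠ 0)
    (h : Z - α⁻¹ * log (2 * cosh (α * Q + α * (a - b) * m)) + β⁻¹ * log (2 * cosh (β * Q))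
      + 1 / 2 * (a - b) * m ^ 2 = 0) :
    Z = (a - b) * m - (a - b) / 2 * m ^ 2
      + α⁻¹ * (log (2 * cosh (α * Q + α * (a - b) * m)) - (α * Q + α * (a - b) * m))
      - β⁻¹ * (log (2 * cosh (β * Q)) - β * Q) := by
  linear_combination h + (Q + (a - b) * m) * inv_mul_cancel₀ hα - Q * inv_mul_cancel₀ hβ

/-- Asymptotics of the Legendrian `Λ_{a,α}` at large effective magnetic field:
if `P, Z : ℝ → ℝ` solve the two defining equations of `Λ_{a,α}` in the
coordinates adapted to `Λ_{b,β}` for all `Q`, then `P(Q) → 0` and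
`Z(Q) → (a-b)/2` as `Q → +∞`. -/
theorem legendrian_asymptotics (a b α β : ℝ) (hα : 0 < α) (hβ : 0 < β)
    (P Z : ℝ → ℝ)
    (h1 : ∀ Q : ℝ, P Q - Real.tanh (α * Q + α * (a - b) * (P Q + Real.tanh (β * Q)))
      + Real.tanh (β * Q) = 0)
    (h2 : ∀ Q : ℝ, Z Q
      - α⁻¹ * Real.log (2 * Real.cosh (α * Q + α * (a - b) * (P Q + Real.tanh (β * Q))))
      + β⁻¹ * Real.log (2 * Real.cosh (β * Q))
      + (1 / 2) * (a - b) * (P Q + Real.tanh (β * Q)) ^ 2 = 0) :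
    Tendsto P atTop (nhds 0) ∧ Tendsto Z atTop (nhds ((a - b) / 2)) := by
  set m : ℝ → ℝ := fun Q ↦ P Q + tanh (β * Q)
  set A : ℝ → ℝ := fun Q ↦ α * Q + α * (a - b) * m Q
  have hm : ∀ Q, m Q = tanh (A Q) := fun Q ↦ by linear_combination h1 Q
  have hA : Tendsto A atTop atTop :=
    tendsto_atTop_of_eq_add_mul_tanh (c := α * (a - b)) (tendsto_id.const_mul_atTop hα)
      fun Q ↦ by rw [← hm]; rfl
  have hβQ : Tendsto (β * ·) atTop atTop := tendsto_id.const_mul_atTop hβ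
  have hm1 : Tendsto m atTop (𝓝 1) := (tendsto_tanh_atTop.comp hA).congr fun Q ↦ (hm Q).symm
  refine ⟨by simpa [m] using hm1.sub (tendsto_tanh_atTop.comp hβQ), ?_⟩
  have hL := tendsto_log_two_mul_cosh_sub_self_atTop
  have hlim := (((hm1.const_mul (a - b)).sub ((hm1.pow 2).const_mul ((a - b) / 2))).add
    ((hL.comp hA).const_mul α⁻¹)).sub ((hL.comp hβQ).const_mul β⁻¹)
  convert hlim.congr fun Q ↦ (eq_of_free_energy_eq_zero hα.ne' hβ.ne' (h2 Q)).symm using 2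
  ring
end
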